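/- Let φ, ψ ∈ L¹(ℝ^{2n}) ∩ L²(ℝ^{2n}) and k,l ∈ ℤⁿ. Then for almost every (ξ,ξ') ∈ 𝕋ⁿ×𝕋ⁿ, [φ, T^t_{(k,l)}ψ](ξ,ξ') = e^{−2πi(k·ξ + l·ξ')} e^{−πi k·l} [φ,ψ](ξ,ξ'). -/

import Mathlib

open MeasureTheory Complex Filter
open scoped Real ENNReal

noncomputable section

/-- Integer–real dot product. -/
def idot {n : ℕ} (k : Fin n → ℤ) (x : Fin n → ℝ) : ℝ := ∑ i, (k i : ℝ) * x i

/-- Integer–integer dot product. -/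
def iidot {n : ℕ} (k l : Fin n → ℤ) : ℤ := ∑ i, k i * l i

/-- Cast an integer vector to a real vector. -/
def intCast {n : ℕ} (k : Fin n → ℤ) : Fin n → ℝ := fun i => (k i : ℝ)

/-- The twisted translation `T^t_{(k,l)} φ` on `ℝⁿ × ℝⁿ`:
`T^t_{(k,l)}φ(x,y) = e^{πi(x·l − y·k)} φ(x−k, y−l)`. -/
def twistT {n : ℕ} (k l : Fin n → ℤ) (φ : (Fin n → ℝ) × (Fin n → ℝ) → ℂ) :
    (Fin n → ℝ) × (Fin n → ℝ) → ℂ := fun p =>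
  Complex.exp (Real.pi * Complex.I * (idot l p.1 - idot k p.2)) *
    φ (p.1 - intCast k, p.2 - intCast l)

/-- The kernel of the Weyl transform of `φ`:
`K_φ(ξ,η) = ∫_{ℝⁿ} φ(x, η−ξ) e^{πi x·(ξ+η)} dx`. -/
def weylKernel {n : ℕ} (φ : (Fin n → ℝ) × (Fin n → ℝ) → ℂ) :
    (Fin n → ℝ) × (Fin n → ℝ) → ℂ := fun p =>
  ∫ x : Fin n → ℝ, φ (x, p.2 - p.1) *
    Complex.exp (Real.pi * Complex.I * (∑ i, x i * (p.1 i + p.2 i)))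

/-- The Zak transform of a kernel `K ∈ L²(ℝ^{2n})`:
`Z K(ξ,ξ',η) = Σ_{m∈ℤⁿ} K(m+ξ,η) e^{−2πi m·ξ'}`. -/
def zakK {n : ℕ} (K : (Fin n → ℝ) × (Fin n → ℝ) → ℂ)
    (ξ ξ' η : Fin n → ℝ) : ℂ :=
  ∑' m : Fin n → ℤ, K (intCast m + ξ, η) *
    Complex.exp (-(2 * Real.pi) * Complex.I * idot m ξ')

/-- The Weyl–Zak transform of `φ`. -/
def zakW {n : ℕ} (φ : (Fin n → ℝ) × (Fin n → ℝ) → ℂ)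
    (ξ ξ' η : Fin n → ℝ) : ℂ := zakK (weylKernel φ) ξ ξ' η

/-- The bracket map `[φ,ψ](ξ,ξ') = ∫_{ℝⁿ} Z_Wφ(ξ,ξ',η) conj(Z_Wψ(ξ,ξ',η)) dη`. -/
def bracket {n : ℕ} (φ ψ : (Fin n → ℝ) × (Fin n → ℝ) → ℂ)
    (ξ ξ' : Fin n → ℝ) : ℂ :=
  ∫ η : Fin n → ℝ, zakW φ ξ ξ' η * (starRingEnd ℂ) (zakW ψ ξ ξ' η)

/-- The (real-valued) autocorrelation bracket `[φ,φ](ξ,ξ') = ∫_{ℝⁿ} |Z_Wφ(ξ,ξ',η)|² dη`. -/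
def abracket {n : ℕ} (φ : (Fin n → ℝ) × (Fin n → ℝ) → ℂ)
    (ξ ξ' : Fin n → ℝ) : ℝ :=
  ∫ η : Fin n → ℝ, ‖zakW φ ξ ξ' η‖ ^ 2

/-- The fundamental domain `[0,1)ⁿ` of `𝕋ⁿ`. -/
def box (n : ℕ) : Set (Fin n → ℝ) := Set.univ.pi fun _ => Set.Ico (0 : ℝ) 1

/-- The `L²` inner product (conjugate-linear in the second argument). -/
def L2inner {α : Type*} [MeasurableSpace α] (μ : Measure α) (f g : α → ℂ) : ℂ :=
  ∫ x, f x * (starRingEnd ℂ) (g x) ∂μ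

/-- `f` belongs to the closed linear span in `L²(ℝ^{2n})` of the twisted translates
`{T^t_{(k,l)}φ : k,l ∈ ℤⁿ}`, i.e. to `V^t(φ)`. -/
def inVt {n : ℕ} (φ f : (Fin n → ℝ) × (Fin n → ℝ) → ℂ) : Prop :=
  ∀ ε : ℝ, 0 < ε →
    ∃ (s : Finset ((Fin n → ℤ) × (Fin n → ℤ))) (a : (Fin n → ℤ) × (Fin n → ℤ) → ℂ),
      eLpNorm (fun p => f p - ∑ kl ∈ s, a kl * twistT kl.1 kl.2 φ p) 2 volume
        < ENNReal.ofReal ε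

/-! The twisted translate `T^t_{(k,l)}ψ` multiplies the Weyl kernel by a character and shifts
its first variable by `l`: `K_{T^t_{(k,l)}ψ}(ξ,η) = e^{πi k·l} e^{2πi k·ξ} K_ψ(ξ+l,η)`. On the Zak
side, a character `e^{2πi k·ξ}` is `ℤⁿ`-periodic in `ξ` and so passes through the sum unchanged,
while the shift by `l` becomes the factor `e^{2πi l·ξ'}` after reindexing `m ↦ m + l`. Hence
`Z_W(T^t_{(k,l)}ψ) = c · Z_Wψ` for a unimodular constant `c`, and the bracket picks up `conj c`. -/

section

variable {n : ℕ}

lemma idot_add_right (k : Fin n → ℤ) (x y : Fin n → ℝ) :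
    idot k (x + y) = idot k x + idot k y := by
  simp [idot, mul_add, Finset.sum_add_distrib]

lemma idot_add_left (k m : Fin n → ℤ) (x : Fin n → ℝ) :
    idot (k + m) x = idot k x + idot m x := by
  simp [idot, add_mul, Finset.sum_add_distrib]

lemma idot_intCast (k m : Fin n → ℤ) : idot k (intCast m) = iidot k m := by
  simp [idot, iidot, intCast]

lemma intCast_add (k m : Fin n → ℤ) : intCast (k + m) = intCast k + intCast m := by
  funext i
  simp [intCast]

lemma exp_two_pi_I_idot_intCast_add (k m : Fin n → ℤ) (ξ : Fin n → ℝ) :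
    exp (2 * π * I * idot k (intCast m + ξ)) = exp (2 * π * I * idot k ξ) := by
  have period : exp (2 * π * I * ((iidot k m : ℝ) : ℂ)) = 1 := by
    rw [ofReal_intCast, mul_comm]
    exact exp_int_mul_two_pi_mul_I _
  rw [idot_add_right, idot_intCast, ofReal_add, mul_add, exp_add, period, one_mul]

lemma zakK_const_mul (c : ℂ) (K : (Fin n → ℝ) × (Fin n → ℝ) → ℂ) (ξ ξ' η : Fin n → ℝ) :
    zakK (fun p => c * K p) ξ ξ' η = c * zakK K ξ ξ' η := by
  simp only [zakK, mul_assoc, tsum_mul_left]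

lemma zakK_modulate (k : Fin n → ℤ) (K : (Fin n → ℝ) × (Fin n → ℝ) → ℂ) (ξ ξ' η : Fin n → ℝ) :
    zakK (fun p => exp (2 * π * I * idot k p.1) * K p) ξ ξ' η
      = exp (2 * π * I * idot k ξ) * zakK K ξ ξ' η := by
  simp only [zakK, exp_two_pi_I_idot_intCast_add]
  simp only [mul_assoc, tsum_mul_left]

lemma zakK_shift (l : Fin n → ℤ) (K : (Fin n → ℝ) × (Fin n → ℝ) → ℂ) (ξ ξ' η : Fin n → ℝ) :
    zakK (fun p => K (p.1 + intCast l, p.2)) ξ ξ' η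
      = exp (2 * π * I * idot l ξ') * zakK K ξ ξ' η := by
  rw [zakK, zakK, ← tsum_mul_left]
  refine .trans ?_ ((Equiv.addRight l).tsum_eq _)
  refine tsum_congr fun m => ?_
  rw [Equiv.coe_addRight, intCast_add, add_right_comm, idot_add_left, mul_left_comm,
    ← exp_add]
  congr 2
  push_cast
  ring

lemma weylKernel_twistT_phase (k l : Fin n → ℤ) (x ξ η : Fin n → ℝ) :
    idot l (x + intCast k) - idot k (η - ξ) + ∑ i, (x + intCast k) i * (ξ i + η i)
      = iidot k l + 2 * idot k ξ + ∑ i, x i * ((ξ + intCast l) i + η i) := by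
  simp only [idot, iidot, intCast, Pi.add_apply, Pi.sub_apply, Int.cast_sum, Int.cast_mul,
    Finset.mul_sum, ← Finset.sum_add_distrib, ← Finset.sum_sub_distrib]
  exact Finset.sum_congr rfl fun i _ => by ring

lemma weylKernel_twistT (ψ : (Fin n → ℝ) × (Fin n → ℝ) → ℂ) (k l : Fin n → ℤ) :
    weylKernel (twistT k l ψ) = fun p => exp (π * I * (iidot k l : ℝ)) *
      (exp (2 * π * I * idot k p.1) * weylKernel ψ (p.1 + intCast l, p.2)) := by
  funext p
  rw [weylKernel, ← integral_add_right_eq_self _ (intCast k), weylKernel, ← integral_const_mul,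
    ← integral_const_mul]
  refine integral_congr_ae (Eventually.of_forall fun x => ?_)
  simp only [twistT, add_sub_cancel_right, sub_sub]
  generalize ψ _ = z
  calc _ = z * exp (π * I * ((idot l (x + intCast k) - idot k (p.2 - p.1)
              + ∑ i, (x + intCast k) i * (p.1 i + p.2 i) : ℝ) : ℂ)) := by
          rw [mul_right_comm, ← exp_add, mul_comm _ z]
          congr 2
          push_cast
          ring
    _ = _ := by
          rw [weylKernel_twistT_phase, ofReal_add, ofReal_add, mul_add, mul_add, exp_add, exp_add]
          push_cast
          ring_nf

lemma zakW_twistT (ψ : (Fin n → ℝ) × (Fin n → ℝ) → ℂ) (k l : Fin n → ℤ) (ξ ξ' η : Fin n → ℝ) :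
    zakW (twistT k l ψ) ξ ξ' η = exp (π * I * (iidot k l : ℝ)) * exp (2 * π * I * idot k ξ) *
      exp (2 * π * I * idot l ξ') * zakW ψ ξ ξ' η := by
  rw [zakW, weylKernel_twistT, zakK_const_mul,
    zakK_modulate k (fun p => weylKernel ψ (p.1 + intCast l, p.2)), zakK_shift, zakW]
  simp only [mul_assoc]

lemma bracket_eq_conj_mul_of_zakW_eq {φ ψ ψ' : (Fin n → ℝ) × (Fin n → ℝ) → ℂ}
    {ξ ξ' : Fin n → ℝ} (c : ℂ) (h : ∀ η, zakW ψ' ξ ξ' η = c * zakW ψ ξ ξ' η) :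
    bracket φ ψ' ξ ξ' = starRingEnd ℂ c * bracket φ ψ ξ ξ' := by
  simp only [bracket, h, map_mul, ← integral_const_mul, mul_left_comm]

end

theorem bracket_twistT_right_general {n : ℕ} (φ ψ : (Fin n → ℝ) × (Fin n → ℝ) → ℂ)
    (k l : Fin n → ℤ) :
    ∀ᵐ q : (Fin n → ℝ) × (Fin n → ℝ) ∂(volume.restrict (box n ×ˢ box n)),
      bracket φ (twistT k l ψ) q.1 q.2
        = Complex.exp (-(2 * Real.pi) * Complex.I * (idot k q.1 + idot l q.2)) *
            Complex.exp (-(Real.pi) * Complex.I * ((iidot k l : ℤ) : ℝ)) *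
            bracket φ ψ q.1 q.2 := by
  refine Eventually.of_forall fun q => ?_
  rw [bracket_eq_conj_mul_of_zakW_eq _ (zakW_twistT ψ k l q.1 q.2)]
  congr 1
  rw [← exp_add, ← exp_add, ← exp_conj, ← exp_add]
  congr 1
  simp only [map_add, map_mul, conj_I, conj_ofReal, map_ofNat]
  push_cast
  ring

/-- `[φ, T^t_{(k,l)}ψ] = e^{−2πi(k·ξ+l·ξ')} e^{−πi k·l} [φ,ψ]` a.e. on `𝕋ⁿ×𝕋ⁿ`. -/
theorem bracket_twistT_right {n : ℕ} (φ ψ : (Fin n → ℝ) × (Fin n → ℝ) → ℂ)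
    (hφ1 : Integrable φ volume) (hφ2 : MemLp φ 2 volume)
    (hψ1 : Integrable ψ volume) (hψ2 : MemLp ψ 2 volume) (k l : Fin n → ℤ) :
    ∀ᵐ q : (Fin n → ℝ) × (Fin n → ℝ) ∂(volume.restrict (box n ×ˢ box n)),
      bracket φ (twistT k l ψ) q.1 q.2
        = Complex.exp (-(2 * Real.pi) * Complex.I * (idot k q.1 + idot l q.2)) *
            Complex.exp (-(Real.pi) * Complex.I * ((iidot k l : ℤ) : ℝ)) *
            bracket φ ψ q.1 q.2 :=
  bracket_twistT_right_general φ ψ k l
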